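/- Let H be a real Hilbert space and e ∈ H with ‖e‖ = 1. Define C := {v ∈ H : ⟨e, v⟩ ≥ ‖v‖/2}. Then C is a closed convex proper cone (i.e. t·v ∈ C for all t ≥ 0 and v ∈ C, and C ∩ (−C) = {0}), the closed ball B(e, 1/6) is contained in C, and the closed ball B(e, 1/6) is contained in the dual cone C′ = {u ∈ H : ⟨u, v⟩ ≥ 0 for all v ∈ C}. -/

import Mathlib

/-!
Both ball inclusions are Cauchy–Schwarz estimates. A vector `v` within `r` of the unit vector `e`
has `‖v‖ ≤ 1 + r` and `⟪e, v⟫ ≥ 1 - r`, so it lies in `{v | α ‖v‖ ≤ ⟪e, v⟫}` once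
`α (1 + r) ≤ 1 - r`. A vector `u` within `r` of `e` has `⟪u, v⟫ ≥ ⟪e, v⟫ - r ‖v‖ ≥ (α - r) ‖v‖`
on that cone, so it lies in the dual cone once `r ≤ α`. For `α = 1/2` both hold with `r = 1/6`.
-/

open scoped RealInnerProductSpace

noncomputable section

variable {H : Type*}

def dualCone [NormedAddCommGroup H] [InnerProductSpace ℝ H] (C : Set H) : Set H :=
  {u : H | ∀ v ∈ C, 0 ≤ ⟪u, v⟫}

section ApertureCone

variable [NormedAddCommGroup H] [InnerProductSpace ℝ H]

def apertureCone (e : H) (α : ℝ) : Set H :=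
  {v | α * ‖v‖ ≤ ⟪e, v⟫}

variable {e : H} {α r : ℝ}

theorem mem_apertureCone {v : H} : v ∈ apertureCone e α ↔ α * ‖v‖ ≤ ⟪e, v⟫ :=
  Iff.rfl

theorem isClosed_apertureCone (e : H) (α : ℝ) : IsClosed (apertureCone e α) :=
  isClosed_le (by fun_prop) (by fun_prop)

theorem convex_apertureCone (e : H) (hα : 0 ≤ α) : Convex ℝ (apertureCone e α) := by
  have hconvex : ConvexOn ℝ Set.univ fun v : H => α * ‖v‖ - ⟪e, v⟫ :=
    ((convexOn_norm convex_univ).smul hα).sub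
      ((innerₛₗ ℝ e).concaveOn convex_univ)
  simpa [apertureCone, sub_nonpos] using hconvex.convex_le 0

theorem smul_mem_apertureCone {t : ℝ} (ht : 0 ≤ t) {v : H} (hv : v ∈ apertureCone e α) :
    t • v ∈ apertureCone e α := by
  rw [mem_apertureCone, norm_smul, Real.norm_of_nonneg ht, real_inner_smul_right]
  nlinarith [mem_apertureCone.mp hv]

theorem apertureCone_inter_neg (e : H) (hα : 0 < α) :
    apertureCone e α ∩ -apertureCone e α = {0} := by
  refine Set.Subset.antisymm ?_ (by simp [apertureCone])
  rintro v ⟨hv, hnegv⟩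
  rw [Set.mem_neg, mem_apertureCone, norm_neg, inner_neg_right] at hnegv
  have : α * ‖v‖ ≤ 0 := by linarith [mem_apertureCone.mp hv]
  simpa using (nonpos_of_mul_nonpos_right this hα).antisymm (norm_nonneg v)

theorem one_sub_le_inner_of_mem_closedBall (he : ‖e‖ = 1) {v : H}
    (hv : v ∈ Metric.closedBall e r) : 1 - r ≤ ⟪e, v⟫ := by
  have hcs : ⟪e, e - v⟫ ≤ r := calc
    ⟪e, e - v⟫ ≤ ‖e‖ * ‖e - v‖ := real_inner_le_norm _ _
    _ ≤ r := by rw [he, one_mul, ← dist_eq_norm]; exact Metric.mem_closedBall'.mp hv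
  rw [inner_sub_right, real_inner_self_eq_norm_sq, he] at hcs
  linarith

theorem closedBall_subset_apertureCone (he : ‖e‖ = 1) (hα : 0 ≤ α)
    (hr : α * (1 + r) ≤ 1 - r) : Metric.closedBall e r ⊆ apertureCone e α := by
  intro v hv
  have hnorm : ‖v‖ ≤ 1 + r := he ▸ norm_le_of_mem_closedBall hv
  calc α * ‖v‖ ≤ α * (1 + r) := by gcongr
    _ ≤ 1 - r := hr
    _ ≤ ⟪e, v⟫ := one_sub_le_inner_of_mem_closedBall he hv

theorem closedBall_subset_dualCone_apertureCone (hr : r ≤ α) :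
    Metric.closedBall e r ⊆ dualCone (apertureCone e α) := by
  intro u hu v hv
  have hcs : ⟪e - u, v⟫ ≤ r * ‖v‖ := calc
    ⟪e - u, v⟫ ≤ ‖e - u‖ * ‖v‖ := real_inner_le_norm _ _
    _ ≤ r * ‖v‖ := by
      gcongr; rw [← dist_eq_norm]; exact Metric.mem_closedBall'.mp hu
  rw [inner_sub_left] at hcs
  have := mul_le_mul_of_nonneg_right hr (norm_nonneg v)
  linarith [mem_apertureCone.mp hv]

end ApertureCone

/-- Example 3.1(ii): the aperture cone `C = {v : ⟪e, v⟫ ≥ ‖v‖/2}` around a unit vector `e`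
is a closed convex proper cone containing the closed ball `B(e, 1/6)`, which is also
contained in the dual cone `C'`. -/
theorem aperture_cone_satisfies_condition_C
    [NormedAddCommGroup H] [InnerProductSpace ℝ H]
    (e : H) (he : ‖e‖ = 1)
    (C : Set H) (hC : C = {v : H | ‖v‖ / 2 ≤ ⟪e, v⟫}) :
    IsClosed C ∧ Convex ℝ C ∧ (∀ t : ℝ, 0 ≤ t → ∀ v ∈ C, t • v ∈ C) ∧
    C ∩ (-C) = {0} ∧
    Metric.closedBall e (1 / 6) ⊆ C ∧
    Metric.closedBall e (1 / 6) ⊆ dualCone C := by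
  obtain rfl : C = apertureCone e (1 / 2) := by
    rw [hC, apertureCone]
    simp only [one_div_mul_eq_div]
  exact ⟨isClosed_apertureCone e _, convex_apertureCone e (by norm_num),
    fun t ht v hv => smul_mem_apertureCone ht hv, apertureCone_inter_neg e (by norm_num),
    closedBall_subset_apertureCone he (by norm_num) (by norm_num),
    closedBall_subset_dualCone_apertureCone (by norm_num)⟩
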